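/- Let A be a commutative ℚ-algebra and let Δ = ∑ Δ′ ⊗ Δ″ ∈ A ⊗ A satisfy: (i) τΔ = −Δ, where τ is the flip of the two tensor factors; (ii) (a ⊗ 1)·Δ = (1 ⊗ a)·Δ for every a ∈ A; and (iii) ∑ Δ′Δ″ = 0 in A (vanishing Euler class). Fix an integer r ≥ 1. Let T := A^{⊗r}, for 1 ≤ i ≤ r let μ_i : A → T be the ℚ-algebra map inserting into the i-th tensor factor (with units elsewhere), and for i ≠ j set Δ_{ij} := ∑ μ_i(Δ′)·μ_j(Δ″) ∈ T. Let B be the polynomial T-algebra on variables x_{ij} indexed by pairs 1 ≤ i < j ≤ r, and set ω_{ij} := x_{ij} for i < j and ω_{ij} := −x_{ji} for i > j. Let I ⊆ B be the ideal generated by: ω_{ij}·ω_{ij} for all i ≠ j; the Arnold elements ω_{ij}ω_{jk} + ω_{jk}ω_{ki} + ω_{ki}ω_{ij} for all pairwise distinct i, j, k; and (μ_i(a) − μ_j(a))·ω_{ij} for all a ∈ A and all i ≠ j. Let d : B → B be the unique T-linear derivation with d(x_{ij}) = Δ_{ij} for i < j. Then d(I) ⊆ I; in particular d descends to a derivation of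 the quotient algebra B/I. -/

import Mathlib

/-!
It suffices that `d` sends each generator of `I` into `I`. The coefficients `c ∈ T` with
`c·ω_{ij} ∈ I` form an ideal containing every `μ_i(a) - μ_j(a)`; applying `μ_k ⊗ (-)` to `Δ`
shows it contains `Δ_{ki} - Δ_{kj}`, and for `k = i` also `Δ_{ij}` itself, because `Δ_{ii}` is
the image of the Euler class. Using antisymmetry, `d(ω_{ij}²)` and `d` of an Arnold element are
sums of such terms `c·ω_{ij}`, while `d((μ_i(a) - μ_j(a))·ω_{ij}) = (μ_i(a) - μ_j(a))·Δ_{ij}`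
vanishes by `(a ⊗ 1)·Δ = (1 ⊗ a)·Δ`.
-/

open scoped TensorProduct

noncomputable section

namespace LSModel

variable {A : Type*} [CommRing A] [Algebra ℚ A] (r : ℕ)

/-- The index set of the polynomial generators `x_{ij}`, one for each pair `1 ≤ i < j ≤ r`. -/
abbrev PairIdx : Type := { p : Fin r × Fin r // p.1 < p.2 }

/-- `T := A^{⊗r}`, the `r`-fold tensor power of `A` over `ℚ`. -/
abbrev TPow (A : Type*) [CommRing A] [Algebra ℚ A] (r : ℕ) : Type _ :=
  ⨂[ℚ] (_ : Fin r), A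

/-- `μ_i : A → A^{⊗r}`, the ℚ-algebra map inserting into the `i`-th tensor factor
(with units elsewhere). -/
abbrev ins (i : Fin r) : A →ₐ[ℚ] TPow A r :=
  PiTensorProduct.singleAlgHom (R := ℚ) (A := fun _ : Fin r => A) i

/-- `Δ_{ij} := ∑ μ_i(Δ′)·μ_j(Δ″) ∈ T`, the image of `Δ ∈ A ⊗ A` under `μ_i ⊗ μ_j`. -/
abbrev diag (Δ : A ⊗[ℚ] A) (i j : Fin r) : TPow A r :=
  Algebra.TensorProduct.productMap (ins (A := A) r i) (ins (A := A) r j) Δ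

/-- The polynomial `T`-algebra `B` on the generators `x_{ij}`, `i < j`. -/
abbrev PolyB (A : Type*) [CommRing A] [Algebra ℚ A] (r : ℕ) : Type _ :=
  MvPolynomial (PairIdx r) (TPow A r)

/-- `ω_{ij}`: the generator `x_{ij}` for `i < j`, `-x_{ji}` for `i > j` (and `0` for `i = j`,
a value which is never used). -/
def omega (i j : Fin r) : PolyB A r :=
  if h : i < j then MvPolynomial.X ⟨(i, j), h⟩
  else if h : j < i then -MvPolynomial.X ⟨(j, i), h⟩ else 0

/-- The ideal `I ⊆ B` generated by the squares `ω_{ij}²`, the Arnold elements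
`ω_{ij}ω_{jk} + ω_{jk}ω_{ki} + ω_{ki}ω_{ij}`, and the elements `(μ_i(a) - μ_j(a))·ω_{ij}`. -/
def relIdeal : Ideal (PolyB A r) :=
  Ideal.span
    ({b | ∃ i j : Fin r, i ≠ j ∧ b = omega r i j * omega r i j} ∪
     {b | ∃ i j k : Fin r, i ≠ j ∧ j ≠ k ∧ i ≠ k ∧
        b = omega r i j * omega r j k + omega r j k * omega r k i
            + omega r k i * omega r i j} ∪
     {b | ∃ (a : A) (i j : Fin r), i ≠ j ∧
        b = (MvPolynomial.C (ins r i a) - MvPolynomial.C (ins r j a)) * omega r i j})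

/-- The unique `T`-linear derivation `d` of `B` with `d(x_{ij}) = Δ_{ij}`. -/
def diffB (Δ : A ⊗[ℚ] A) : Derivation (TPow A r) (PolyB A r) (PolyB A r) :=
  MvPolynomial.mkDerivation (TPow A r)
    (fun p : PairIdx r => MvPolynomial.C (diag r Δ p.val.1 p.val.2))

end LSModel

section TensorProduct

variable {R A B S : Type*} [CommSemiring R] [CommSemiring A] [Algebra R A]
  [CommSemiring B] [Algebra R B]

theorem Algebra.TensorProduct.productMap_comm_apply [CommSemiring S] [Algebra R S]
    (f : A →ₐ[R] S) (g : B →ₐ[R] S) (t : A ⊗[R] B) :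
    productMap g f (_root_.TensorProduct.comm R A B t) = productMap f g t := by
  induction t using TensorProduct.induction_on with
  | zero => simp
  | tmul a b => simp [productMap_apply_tmul, mul_comm]
  | add s t hs ht => simp only [map_add, hs, ht]

theorem Algebra.TensorProduct.productMap_self_apply [CommSemiring S] [Algebra R S]
    (f : A →ₐ[R] S) (t : A ⊗[R] A) :
    productMap f f t = f (LinearMap.mul' R A t) := by
  induction t using TensorProduct.induction_on with
  | zero => simp
  | tmul a b => simp [productMap_apply_tmul]
  | add s t hs ht => simp only [map_add, hs, ht]

theorem Algebra.TensorProduct.productMap_sub_productMap_mem [CommRing S] [Algebra R S]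
    (f : A →ₐ[R] S) (g h : B →ₐ[R] S) {K : Ideal S} (hK : ∀ b, g b - h b ∈ K)
    (t : A ⊗[R] B) : productMap f g t - productMap f h t ∈ K := by
  induction t using TensorProduct.induction_on with
  | zero => simp
  | tmul a b =>
    simpa only [productMap_apply_tmul, ← mul_sub] using K.mul_mem_left (f a) (hK b)
  | add s t hs ht => simpa only [map_add, add_sub_add_comm] using add_mem hs ht

end TensorProduct

theorem Derivation.map_mem_span {R A : Type*} [CommSemiring R] [CommSemiring A] [Algebra R A]
    (D : Derivation R A A) {s : Set A} (hs : ∀ x ∈ s, D x ∈ Ideal.span s) {x : A}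
    (hx : x ∈ Ideal.span s) : D x ∈ Ideal.span s := by
  induction hx using Submodule.span_induction with
  | mem x hx => exact hs x hx
  | zero => simp
  | add x y _ _ hx hy => simpa only [map_add] using add_mem hx hy
  | smul c x hx hDx =>
    rw [smul_eq_mul, D.leibniz, smul_eq_mul, smul_eq_mul]
    exact add_mem (Ideal.mul_mem_left _ c hDx) (Ideal.mul_mem_right _ _ hx)

namespace LSModel

open MvPolynomial Algebra.TensorProduct

variable {A : Type*} [CommRing A] [Algebra ℚ A] (r : ℕ) {Δ : A ⊗[ℚ] A}

theorem diag_swap (hΔanti : TensorProduct.comm ℚ A A Δ = -Δ) (i j : Fin r) :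
    diag r Δ j i = -diag r Δ i j := by
  rw [diag, ← productMap_comm_apply, hΔanti, map_neg]

theorem diffB_omega (hΔanti : TensorProduct.comm ℚ A A Δ = -Δ) {i j : Fin r} (hij : i ≠ j) :
    diffB r Δ (omega r i j) = C (diag r Δ i j) := by
  rcases hij.lt_or_gt with h | h
  · rw [omega, dif_pos h, diffB, mkDerivation_X]
  · rw [omega, dif_neg h.not_gt, dif_pos h, map_neg, diffB, mkDerivation_X,
      diag_swap r hΔanti, map_neg, neg_neg]

theorem ins_mul_diag
    (hΔdiag : ∀ a : A, ((a ⊗ₜ[ℚ] (1 : A)) * Δ : A ⊗[ℚ] A) = ((1 : A) ⊗ₜ[ℚ] a) * Δ)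
    (a : A) (i j : Fin r) : ins r i a * diag r Δ i j = ins r j a * diag r Δ i j := by
  simpa only [map_mul, productMap_left_apply, productMap_right_apply]
    using congrArg (productMap (ins (A := A) r i) (ins r j)) (hΔdiag a)

def omegaColon (i j : Fin r) : Ideal (TPow A r) :=
  ((relIdeal (A := A) r).colon {omega r i j}).comap C

theorem mem_omegaColon {i j : Fin r} {c : TPow A r} :
    c ∈ omegaColon r i j ↔ C c * omega r i j ∈ relIdeal r := by
  rw [omegaColon, Ideal.mem_comap, Submodule.mem_colon_singleton, smul_eq_mul]

theorem ins_sub_ins_mem_omegaColon {i j : Fin r} (hij : i ≠ j) (a : A) :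
    ins r i a - ins r j a ∈ omegaColon r i j := by
  rw [mem_omegaColon, map_sub]
  exact Ideal.subset_span (Or.inr ⟨a, i, j, hij, rfl⟩)

theorem diag_sub_diag_mem_omegaColon (k : Fin r) {i j : Fin r} (hij : i ≠ j) :
    diag r Δ k i - diag r Δ k j ∈ omegaColon r i j :=
  productMap_sub_productMap_mem _ _ _ (ins_sub_ins_mem_omegaColon r hij) Δ

theorem diag_mem_omegaColon (hEuler : LinearMap.mul' ℚ A Δ = 0) {i j : Fin r} (hij : i ≠ j) :
    diag r Δ i j ∈ omegaColon r i j := by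
  have h := diag_sub_diag_mem_omegaColon r (Δ := Δ) i hij
  rwa [diag, productMap_self_apply, hEuler, map_zero, zero_sub, neg_mem_iff] at h

theorem diffB_omega_mul_self_mem (hΔanti : TensorProduct.comm ℚ A A Δ = -Δ)
    (hEuler : LinearMap.mul' ℚ A Δ = 0) {i j : Fin r} (hij : i ≠ j) :
    diffB r Δ (omega r i j * omega r i j) ∈ relIdeal r := by
  have h := (mem_omegaColon r).1 (diag_mem_omegaColon r hEuler hij)
  rw [Derivation.leibniz, diffB_omega r hΔanti hij, smul_eq_mul, mul_comm]
  exact add_mem h h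

theorem diffB_arnold_mem (hΔanti : TensorProduct.comm ℚ A A Δ = -Δ) {i j k : Fin r}
    (hij : i ≠ j) (hjk : j ≠ k) (hik : i ≠ k) :
    diffB r Δ (omega r i j * omega r j k + omega r j k * omega r k i
      + omega r k i * omega r i j) ∈ relIdeal r := by
  have key : diffB r Δ (omega r i j * omega r j k + omega r j k * omega r k i
      + omega r k i * omega r i j)
      = C (diag r Δ i j - diag r Δ i k) * omega r j k
        + C (diag r Δ j k - diag r Δ j i) * omega r k i
        + C (diag r Δ k i - diag r Δ k j) * omega r i j := by
    rw [diag_swap r hΔanti k i, diag_swap r hΔanti i j, diag_swap r hΔanti j k]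
    simp only [map_add, Derivation.leibniz, smul_eq_mul, diffB_omega r hΔanti hij,
      diffB_omega r hΔanti hjk, diffB_omega r hΔanti hik.symm, map_sub, map_neg]
    ring
  rw [key]
  refine add_mem (add_mem ?_ ?_) ?_ <;> rw [← mem_omegaColon]
  · exact diag_sub_diag_mem_omegaColon r i hjk
  · exact diag_sub_diag_mem_omegaColon r j hik.symm
  · exact diag_sub_diag_mem_omegaColon r k hij

theorem diffB_ins_sub_ins_mul_omega (hΔanti : TensorProduct.comm ℚ A A Δ = -Δ)
    (hΔdiag : ∀ a : A, ((a ⊗ₜ[ℚ] (1 : A)) * Δ : A ⊗[ℚ] A) = ((1 : A) ⊗ₜ[ℚ] a) * Δ)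
    (a : A) {i j : Fin r} (hij : i ≠ j) :
    diffB r Δ ((C (ins r i a) - C (ins r j a)) * omega r i j) = 0 := by
  rw [Derivation.leibniz, diffB_omega r hΔanti hij, map_sub, derivation_C, derivation_C,
    sub_self, smul_zero, add_zero, smul_eq_mul, ← map_sub, ← map_mul, sub_mul,
    ins_mul_diag r hΔdiag, sub_self, map_zero]

theorem relIdeal_is_differential
    (Δ : A ⊗[ℚ] A)
    (hΔanti : TensorProduct.comm ℚ A A Δ = -Δ)
    (hΔdiag : ∀ a : A, ((a ⊗ₜ[ℚ] (1 : A)) * Δ : A ⊗[ℚ] A) = ((1 : A) ⊗ₜ[ℚ] a) * Δ)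
    (hEuler : LinearMap.mul' ℚ A Δ = 0) :
    ∀ b ∈ relIdeal (A := A) r, diffB r Δ b ∈ relIdeal (A := A) r := by
  intro b hb
  refine (diffB r Δ).map_mem_span ?_ hb
  rintro g ((⟨i, j, hij, rfl⟩ | ⟨i, j, k, hij, hjk, hik, rfl⟩) | ⟨a, i, j, hij, rfl⟩)
  · exact diffB_omega_mul_self_mem r hΔanti hEuler hij
  · exact diffB_arnold_mem r hΔanti hij hjk hik
  · rw [diffB_ins_sub_ins_mul_omega r hΔanti hΔdiag a hij]
    exact zero_mem _

end LSModel
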